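/- arXiv:1002.2293 — 4 statements merged into one kernel-verified Lean document; each statement's English description precedes it below -/
import Mathlib

section
/- If G is an s×m random matrix over F_q with independent uniformly distributed entries and H is any m×n random matrix independent of G, then the conditional probability that rank(GH) = s given rank(H) = r (for s ≤ r ≤ m) equals ∏_{i=0}^{s-1}(1 − q^{-(r-i)}). -/
/-!
Condition on `H`. The rows of `G * H` are the images of the rows of `G` under `x ↦ x ᵥ* H`,
and `rank (G * H) = s` says exactly that these images are linearly independent. Onto its
image, the `r`-dimensional row space of `H`, the map `x ↦ x ᵥ* H` is a surjective
homomorphism, so all of its fibres have the same size; hence the rows of `G * H` are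
independent and uniform in the row space. The number of linearly independent `s`-tuples
there is `∏ i < s, (q^r - q^i)`, so the conditional probability is the same for every `H` of
rank `r`, and averaging over `H` does not change it.
-/

open Finset Module

theorem AddMonoidHom.natCard_subtype_comp_mul_natCard {A B : Type*} [AddGroup A] [Finite A]
    [AddMonoid B] (φ : A →+ B) (hφ : Function.Surjective φ) (p : B → Prop) :
    Nat.card {a // p (φ a)} * Nat.card B = Nat.card {b // p b} * Nat.card A := by
  classical
  have : Fintype A := Fintype.ofFinite A
  have : Fintype B := have := Finite.of_surjective φ hφ; Fintype.ofFinite B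
  set c := #{a | φ a = 0}
  have hfiber (b : B) : #{a | φ a = b} = c :=
    card_fiber_eq_of_mem_range φ (hφ b) ⟨0, map_zero φ⟩
  have hcount (p : B → Prop) [DecidablePred p] : #{a | p (φ a)} = #{b | p b} * c := by
    rw [← sum_const_nat fun b _ => hfiber b, sum_card_fiberwise_eq_card_filter univ _ φ]
    simp
  simp only [Nat.card_eq_fintype_card, Fintype.card_subtype]
  have hA : Fintype.card A = Fintype.card B * c := by simpa using hcount fun _ => True
  rw [hcount p, hA]
  ring

theorem LinearMap.natCard_linearIndependent_comp_mul {F V W : Type*} [Field F] [Fintype F]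
    [AddCommGroup V] [Module F V] [Finite V] [AddCommGroup W] [Module F W]
    (f : V →ₗ[F] W) {s : ℕ} (hs : s ≤ finrank F (range f)) :
    Nat.card {g : Fin s → V // LinearIndependent F (f ∘ g)} *
        Fintype.card F ^ (s * finrank F (range f)) =
      (∏ i : Fin s, (Fintype.card F ^ finrank F (range f) - Fintype.card F ^ (i : ℕ))) *
        Fintype.card F ^ (s * finrank F V) := by
  have hli (g : Fin s → V) :
      LinearIndependent F (f ∘ g) ↔ LinearIndependent F (f.rangeRestrict ∘ g) :=
    (range f).subtype.linearIndependent_iff (v := f.rangeRestrict ∘ g) (Submodule.ker_subtype _)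
  have : Finite (range f) := Finite.of_surjective _ f.surjective_rangeRestrict
  have hcard : Nat.card {g : Fin s → V // LinearIndependent F (f.rangeRestrict ∘ g)} *
      Nat.card (range f) ^ s = Nat.card {h : Fin s → range f // LinearIndependent F h} *
      Nat.card V ^ s := by
    have := (f.rangeRestrict.toAddMonoidHom.compLeft (Fin s)).natCard_subtype_comp_mul_natCard
      f.surjective_rangeRestrict.comp_left (fun h => LinearIndependent F h)
    rwa [Nat.card_fun, Nat.card_fun, Nat.card_fin] at this
  rw [natCard_eq_pow_finrank (K := F) (V := range f), natCard_eq_pow_finrank (K := F) (V := V),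
    Nat.card_eq_fintype_card (α := F), card_linearIndependent hs, ← pow_mul, ← pow_mul] at hcard
  rw [Nat.card_congr (Equiv.subtypeEquivRight hli), mul_comm s, mul_comm s, hcard]

namespace Matrix

theorem rank_eq_card_iff_linearIndependent_row {F l n : Type*} [Field F] [Fintype l] [Fintype n]
    (A : Matrix l n F) : A.rank = Fintype.card l ↔ LinearIndependent F A.row := by
  rw [linearIndependent_iff_card_eq_finrank_span, rank_eq_finrank_span_row, Set.finrank, eq_comm]

theorem rank_eq_finrank_range_vecMulLinear {F m n : Type*} [Field F] [Fintype m] [Fintype n]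
    (H : Matrix m n F) : H.rank = finrank F (LinearMap.range H.vecMulLinear) := by
  rw [range_vecMulLinear, rank_eq_finrank_span_row]

variable {F m n : Type*} [Field F] [Fintype F] [Fintype m] [Fintype n]

theorem natCard_rank_mul_eq_mul_pow (H : Matrix m n F) {s : ℕ} (hs : s ≤ H.rank) :
    Nat.card {G : Matrix (Fin s) m F // (G * H).rank = s} * Fintype.card F ^ (s * H.rank) =
      (∏ i : Fin s, (Fintype.card F ^ H.rank - Fintype.card F ^ (i : ℕ))) *
        Fintype.card F ^ (s * Fintype.card m) := by
  have hiff (G : Matrix (Fin s) m F) :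
      (G * H).rank = s ↔ LinearIndependent F (H.vecMulLinear ∘ G) := by
    have := (G * H).rank_eq_card_iff_linearIndependent_row
    rwa [Fintype.card_fin] at this
  rw [Nat.card_congr (Equiv.subtypeEquivRight hiff), rank_eq_finrank_range_vecMulLinear]
  rw [rank_eq_finrank_range_vecMulLinear] at hs
  have := H.vecMulLinear.natCard_linearIndependent_comp_mul hs
  rwa [finrank_fintype_fun_eq_card] at this

theorem natCard_rank_mul_eq_div_pow (H : Matrix m n F) {s : ℕ} (hs : s ≤ H.rank) :
    (Nat.card {G : Matrix (Fin s) m F // (G * H).rank = s} : ℝ) /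
        (Fintype.card F : ℝ) ^ (s * Fintype.card m) =
      ∏ i ∈ range s, (1 - ((Fintype.card F : ℝ) ^ (H.rank - i))⁻¹) := by
  set q := Fintype.card F
  set r := H.rank
  have hq : 0 < q := Fintype.card_pos
  have hfactor : ∀ i ∈ range s,
      1 - ((q : ℝ) ^ (r - i))⁻¹ = ((q ^ r - q ^ i : ℕ) : ℝ) / (q : ℝ) ^ r := by
    intro i hi
    have hir : i ≤ r := (mem_range.mp hi).le.trans hs
    rw [Nat.cast_sub (Nat.pow_le_pow_right hq hir), Nat.cast_pow, Nat.cast_pow,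
      ← pow_sub_mul_pow (q : ℝ) hir]
    field_simp
  have hcount := congrArg (Nat.cast (R := ℝ)) (H.natCard_rank_mul_eq_mul_pow hs)
  push_cast at hcount
  rw [prod_congr rfl hfactor, prod_div_distrib, prod_const, card_range, ← pow_mul,
    ← Fin.prod_univ_eq_prod_range (fun i => ((q ^ r - q ^ i : ℕ) : ℝ))]
  field_simp
  linear_combination hcount

end Matrix

open Classical in
theorem stmt6_general {F : Type*} [Field F] [Fintype F] (q s r m n : ℕ)
    (hq : Fintype.card F = q) (hsr : s ≤ r)
    (pH : Matrix (Fin m) (Fin n) F → ℝ)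
    (hpos : 0 < ∑ H ∈ Finset.univ.filter (fun H : Matrix (Fin m) (Fin n) F =>
      H.rank = r), pH H) :
    (∑ G : Matrix (Fin s) (Fin m) F,
        ∑ H ∈ Finset.univ.filter (fun H : Matrix (Fin m) (Fin n) F => H.rank = r),
          ((q : ℝ) ^ (s * m))⁻¹ * pH H * (if (G * H).rank = s then 1 else 0)) /
      (∑ H ∈ Finset.univ.filter (fun H : Matrix (Fin m) (Fin n) F => H.rank = r), pH H) =
      ∏ i ∈ Finset.range s, (1 - ((q : ℝ) ^ (r - i))⁻¹) := by
  subst hq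
  have hcond : ∀ H ∈ univ.filter (fun H : Matrix (Fin m) (Fin n) F => H.rank = r),
      ∑ G : Matrix (Fin s) (Fin m) F,
          ((Fintype.card F : ℝ) ^ (s * m))⁻¹ * pH H * (if (G * H).rank = s then 1 else 0) =
        pH H * ∏ i ∈ range s, (1 - ((Fintype.card F : ℝ) ^ (r - i))⁻¹) := by
    intro H hH
    obtain rfl := (mem_filter.mp hH).2
    rw [← mul_sum, sum_boole, ← H.natCard_rank_mul_eq_div_pow hsr, Fintype.card_fin,
      Nat.card_eq_fintype_card, Fintype.card_subtype]
    ring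
  rw [sum_comm, sum_congr rfl hcond, ← sum_mul, mul_div_cancel_left₀ _ hpos.ne']

open Classical in
theorem stmt6 {F : Type*} [Field F] [Fintype F] [DecidableEq F] (q s r m n : ℕ)
    (hq : Fintype.card F = q) (hsr : s ≤ r) (hrm : r ≤ m)
    (pH : Matrix (Fin m) (Fin n) F → ℝ) (hH0 : ∀ H, 0 ≤ pH H)
    (hH1 : ∑ H, pH H = 1)
    (hpos : 0 < ∑ H ∈ Finset.univ.filter (fun H : Matrix (Fin m) (Fin n) F =>
      H.rank = r), pH H) :
    (∑ G : Matrix (Fin s) (Fin m) F,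
        ∑ H ∈ Finset.univ.filter (fun H : Matrix (Fin m) (Fin n) F => H.rank = r),
          ((q : ℝ) ^ (s * m))⁻¹ * pH H * (if (G * H).rank = s then 1 else 0)) /
      (∑ H ∈ Finset.univ.filter (fun H : Matrix (Fin m) (Fin n) F => H.rank = r), pH H) =
      ∏ i ∈ Finset.range s, (1 - ((q : ℝ) ^ (r - i))⁻¹) :=
  stmt6_general q s r m n hq hsr pH hpos
end

section
/- For the linear operator channel Y = XH with X a random T×M matrix independent of the random M×N matrix H, the capacity with channel information at the receiver, max_{p_X} I(X; (Y,H)), equals E[rank(H)]·T·log₂ q. -/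
/-!
Since `Y = XH` is a function of `(X, H)` and `H` is independent of `X`,
`I(X; (Y, H)) = H(Y | H) = E_H[H(XH)]`. For a fixed `h`, the output `Xh` takes values in the
image of `x ↦ xh`, whose rows range independently over the row space of `h`; so it has
`q^(T rank h)` elements and `H(Xh) ≤ T rank h log q`. A uniform `X` attains every bound at once,
because `x ↦ xh` is additive and so all its nonempty fibres have the same size.
-/

open Finset Real

section Entropy

variable {β : Type*} [Fintype β]

noncomputable def shannonEntropy (s : β → ℝ) : ℝ := ∑ b, negMulLog (s b)

lemma shannonEntropy_le_log_card {s : β → ℝ} (A : Finset β) (h0 : ∀ b, 0 ≤ s b)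
    (h1 : ∑ b, s b = 1) (hA : ∀ b, s b ≠ 0 → b ∈ A) :
    shannonEntropy s ≤ log #A := by
  have hout : ∀ b ∈ univ, b ∉ A → s b = 0 := fun b _ hb => by_contra fun h => hb (hA b h)
  have hsumA : ∑ b ∈ A, s b = 1 := by rw [← h1]; exact sum_subset (subset_univ A) hout
  have hcard : (0 : ℝ) < #A := by
    obtain ⟨b, -, hb⟩ := exists_ne_zero_of_sum_ne_zero (hsumA.trans_ne one_ne_zero)
    exact_mod_cast card_pos.mpr ⟨b, hA b hb⟩
  -- Jensen for the concave `negMulLog`, with uniform weights on `A`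
  have jensen := concaveOn_negMulLog.le_map_sum (t := A) (w := fun _ => (#A : ℝ)⁻¹) (p := s)
    (fun _ _ => by positivity) (by simp [hcard.ne']) (fun b _ => h0 b)
  simp only [smul_eq_mul, ← mul_sum, hsumA, mul_one] at jensen
  rw [negMulLog, log_inv, neg_mul_neg] at jensen
  have hsupp : shannonEntropy s = ∑ b ∈ A, negMulLog (s b) :=
    (sum_subset (subset_univ A) fun b hb hbA => by rw [hout b hb hbA, negMulLog_zero]).symm
  rw [hsupp]
  exact le_of_mul_le_mul_left jensen (inv_pos.mpr hcard)

end Entropy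

section Pushforward

variable {α β : Type*} [Fintype α] [DecidableEq β]

def pushforward (f : α → β) (p : α → ℝ) (b : β) : ℝ := ∑ a with f a = b, p a

lemma pushforward_apply (f : α → β) (p : α → ℝ) (b : β) :
    pushforward f p b = ∑ a with f a = b, p a := rfl

lemma mem_image_of_pushforward_ne_zero {f : α → β} {p : α → ℝ} {b : β}
    (hb : pushforward f p b ≠ 0) : b ∈ univ.image f := by
  obtain ⟨a, ha, -⟩ := exists_ne_zero_of_sum_ne_zero hb
  exact mem_image.mpr ⟨a, mem_univ a, (mem_filter.mp ha).2⟩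

lemma pushforward_eq_zero_of_notMem_image {f : α → β} (p : α → ℝ) {b : β}
    (hb : b ∉ univ.image f) : pushforward f p b = 0 :=
  by_contra fun h => hb (mem_image_of_pushforward_ne_zero h)

variable [Fintype β]

lemma sum_pushforward (f : α → β) (p : α → ℝ) : ∑ b, pushforward f p b = ∑ a, p a :=
  sum_fiberwise _ f p

lemma sum_mul_comp_eq_sum_pushforward_mul (f : α → β) (p : α → ℝ) (φ : β → ℝ) :
    ∑ a, p a * φ (f a) = ∑ b, pushforward f p b * φ b := by
  rw [← sum_fiberwise univ f]
  refine sum_congr rfl fun b _ => ?_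
  rw [pushforward_apply, sum_mul]
  exact sum_congr rfl fun a ha => by rw [(mem_filter.mp ha).2]

lemma shannonEntropy_pushforward_le_log_card_image (f : α → β) {p : α → ℝ}
    (h0 : ∀ a, 0 ≤ p a) (h1 : ∑ a, p a = 1) :
    shannonEntropy (pushforward f p) ≤ log #(univ.image f) :=
  shannonEntropy_le_log_card _ (fun _ => sum_nonneg fun a _ => h0 a)
    ((sum_pushforward f p).trans h1) fun _ => mem_image_of_pushforward_ne_zero

lemma card_eq_card_image_mul_card_fiber {G H : Type*} [AddGroup G] [Fintype G] [AddMonoid H]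
    [DecidableEq H] (f : G →+ H) {b : H} (hb : b ∈ univ.image f) :
    Fintype.card G = #(univ.image f) * #{a | f a = b} := by
  rw [← card_univ, card_eq_sum_card_image f univ, ← smul_eq_mul, ← sum_const]
  refine sum_congr rfl fun c hc => AddMonoidHom.card_fiber_eq_of_mem_range f ?_ ?_
  · simpa using hc
  · simpa using hb

lemma pushforward_uniform_of_mem_image {G H : Type*} [AddGroup G] [Fintype G] [AddMonoid H]
    [DecidableEq H] (f : G →+ H) {b : H} (hb : b ∈ univ.image f) :
    pushforward f (fun _ => (Fintype.card G : ℝ)⁻¹) b = (#(univ.image f) : ℝ)⁻¹ := by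
  have hfiber : (#{a | f a = b} : ℝ) ≠ 0 := by
    obtain ⟨a, -, rfl⟩ := mem_image.mp hb
    exact_mod_cast (card_pos.mpr ⟨a, by simp⟩).ne'
  rw [pushforward_apply, sum_const, nsmul_eq_mul, card_eq_card_image_mul_card_fiber f hb]
  push_cast
  field_simp

lemma shannonEntropy_pushforward_uniform {G H : Type*} [AddGroup G] [Fintype G] [AddMonoid H]
    [Fintype H] [DecidableEq H] (f : G →+ H) :
    shannonEntropy (pushforward f fun _ => (Fintype.card G : ℝ)⁻¹) = log #(univ.image f) := by
  have himage : (#(univ.image f) : ℝ) ≠ 0 :=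
    Nat.cast_ne_zero.mpr (univ_nonempty.image f).card_pos.ne'
  rw [shannonEntropy, ← sum_subset (subset_univ _) fun b _ hb => by
    rw [pushforward_eq_zero_of_notMem_image _ hb, negMulLog_zero]]
  rw [sum_congr rfl fun b hb => by rw [pushforward_uniform_of_mem_image f hb], sum_const,
    nsmul_eq_mul, negMulLog, log_inv]
  field_simp

end Pushforward

section MutualInformation

variable {α β γ : Type*} [Fintype α] [Fintype β] [DecidableEq β]

-- `I(X; (Y, H))` in bits for `Y = g X H` with `X ~ p` independent of `H ~ w`: the argument of
-- `logb` is `P(x, y, h) / (P(x) P(y, h))`.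
noncomputable def channelMutualInfo [Fintype γ] (g : α → γ → β) (p : α → ℝ) (w : γ → ℝ) : ℝ :=
  ∑ x, ∑ y, ∑ h, (p x * w h * (if y = g x h then 1 else 0)) *
    logb 2 ((p x * w h * (if y = g x h then 1 else 0)) /
      (p x * ∑ x', p x' * w h * (if y = g x' h then 1 else 0)))

lemma sum_mul_logb_channel_output (g : α → γ → β) (p : α → ℝ) (w : γ → ℝ) (x : α) (h : γ) :
    ∑ y, (p x * w h * (if y = g x h then 1 else 0)) *
      logb 2 ((p x * w h * (if y = g x h then 1 else 0)) /
        (p x * ∑ x', p x' * w h * (if y = g x' h then 1 else 0)))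
    = p x * (w h * (-log (pushforward (g · h) p (g x h)) / log 2)) := by
  have hmarginal : ∑ x', p x' * w h * (if g x h = g x' h then 1 else 0)
      = w h * pushforward (g · h) p (g x h) := by
    simp only [pushforward_apply, sum_filter, mul_sum, mul_ite, mul_one, mul_zero, eq_comm]
    exact sum_congr rfl fun _ _ => by split_ifs <;> ring
  rw [sum_eq_single (g x h) (fun y _ hy => by rw [if_neg hy, mul_zero, zero_mul])
    (fun h => absurd (mem_univ _) h), if_pos rfl, mul_one, hmarginal]
  by_cases hpw : p x * w h = 0
  · simp only [← mul_assoc, hpw, zero_mul]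
  · rw [← mul_assoc, div_mul_eq_div_div, div_self hpw, one_div, logb, log_inv]
    ring

lemma channelMutualInfo_eq [Fintype γ] (g : α → γ → β) (p : α → ℝ) (w : γ → ℝ) :
    channelMutualInfo g p w = ∑ h, w h * (shannonEntropy (pushforward (g · h) p) / log 2) := by
  rw [channelMutualInfo, sum_congr rfl fun x _ => sum_comm, sum_comm]
  refine sum_congr rfl fun h _ => ?_
  rw [sum_congr rfl fun x _ => sum_mul_logb_channel_output g p w x h]
  refine (sum_mul_comp_eq_sum_pushforward_mul (g · h) p
    fun b => w h * (-log (pushforward (g · h) p b) / log 2)).trans ?_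
  simp only [shannonEntropy, negMulLog, mul_sum, sum_div]
  exact sum_congr rfl fun b _ => by ring

end MutualInformation

namespace Matrix

variable {ι m n F : Type*} [Fintype ι] [DecidableEq ι] [Fintype m] [DecidableEq m] [Fintype n]
  [Field F] [Fintype F] [DecidableEq F]

lemma card_image_vecMul (h : Matrix m n F) :
    #(univ.image fun v => v ᵥ* h) = Fintype.card F ^ h.rank := by
  have hrank : h.rank = Module.finrank F (LinearMap.range h.vecMulLinear) := by
    rw [← rank_transpose, rank, mulVecLin_transpose]
  rw [hrank, ← Nat.card_eq_fintype_card, ← Module.natCard_eq_pow_finrank,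
    ← SetLike.coe_sort_coe, Nat.card_coe_set_eq, ← Set.ncard_coe_finset,
    coe_image, coe_univ, Set.image_univ, LinearMap.coe_range]
  rfl

lemma card_image_mul (h : Matrix m n F) :
    #(univ.image fun x : Matrix ι m F => x * h) = Fintype.card F ^ (Fintype.card ι * h.rank) :=
  calc #(univ.image fun x : Matrix ι m F => x * h)
      = #((Fintype.piFinset fun _ : ι => (univ : Finset (m → F))).image fun x i => x i ᵥ* h) := by
        rw [Fintype.piFinset_univ]
        congr 2
    _ = #(Fintype.piFinset fun _ : ι => univ.image fun v => v ᵥ* h) := by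
        rw [Fintype.piFinset_image]
    _ = Fintype.card F ^ (Fintype.card ι * h.rank) := by
        rw [Fintype.card_piFinset, prod_const, card_univ, card_image_vecMul, ← pow_mul, mul_comm]

end Matrix

open Classical in
theorem stmt14_general {F : Type*} [Field F] [Fintype F] [DecidableEq F] (q T M N : ℕ)
    (hq : Fintype.card F = q)
    (pH : Matrix (Fin M) (Fin N) F → ℝ) (hH0 : ∀ h, 0 ≤ pH h) :
    IsGreatest
      {I : ℝ | ∃ p : Matrix (Fin T) (Fin M) F → ℝ,
        (∀ x, 0 ≤ p x) ∧ (∑ x, p x = 1) ∧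
        I = ∑ x : Matrix (Fin T) (Fin M) F, ∑ y : Matrix (Fin T) (Fin N) F,
              ∑ h : Matrix (Fin M) (Fin N) F,
            (p x * pH h * (if y = x * h then 1 else 0)) *
              Real.logb 2 ((p x * pH h * (if y = x * h then 1 else 0)) /
                (p x * ∑ x' : Matrix (Fin T) (Fin M) F,
                  p x' * pH h * (if y = x' * h then 1 else 0)))}
      ((∑ h : Matrix (Fin M) (Fin N) F, pH h * h.rank) * T * Real.logb 2 q) := by
  have hcapacity :
      ∑ h, pH h * (log #(univ.image fun x : Matrix (Fin T) (Fin M) F => x * h) / log 2) =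
        (∑ h, pH h * h.rank) * T * logb 2 q := by
    simp only [Matrix.card_image_mul, hq, Fintype.card_fin, Nat.cast_pow, log_pow, sum_mul]
    exact sum_congr rfl fun h _ => by push_cast; rw [logb]; ring
  constructor
  · refine ⟨fun _ => (Fintype.card (Matrix (Fin T) (Fin M) F) : ℝ)⁻¹, fun _ => by positivity,
      by simp, ?_⟩
    change _ = channelMutualInfo (· * ·) _ pH
    rw [channelMutualInfo_eq, ← hcapacity]
    refine sum_congr rfl fun h _ => congrArg (fun e => pH h * (e / log 2)) ?_
    exact (shannonEntropy_pushforward_uniform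
      (AddMonoidHom.mk' (· * h) (Matrix.add_mul · · h))).symm
  · rintro _ ⟨p, hp0, hp1, rfl⟩
    change channelMutualInfo (· * ·) p pH ≤ _
    rw [channelMutualInfo_eq, ← hcapacity]
    gcongr with h
    · exact hH0 h
    · exact shannonEntropy_pushforward_le_log_card_image _ hp0 hp1

open Classical in
theorem stmt14 {F : Type*} [Field F] [Fintype F] [DecidableEq F] (q T M N : ℕ)
    (hq : Fintype.card F = q)
    (pH : Matrix (Fin M) (Fin N) F → ℝ) (hH0 : ∀ h, 0 ≤ pH h) (hH1 : ∑ h, pH h = 1) :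
    IsGreatest
      {I : ℝ | ∃ p : Matrix (Fin T) (Fin M) F → ℝ,
        (∀ x, 0 ≤ p x) ∧ (∑ x, p x = 1) ∧
        I = ∑ x : Matrix (Fin T) (Fin M) F, ∑ y : Matrix (Fin T) (Fin N) F,
              ∑ h : Matrix (Fin M) (Fin N) F,
            (p x * pH h * (if y = x * h then 1 else 0)) *
              Real.logb 2 ((p x * pH h * (if y = x * h then 1 else 0)) /
                (p x * ∑ x' : Matrix (Fin T) (Fin M) F,
                  p x' * pH h * (if y = x' * h then 1 else 0)))}
      ((∑ h : Matrix (Fin M) (Fin N) F, pH h * h.rank) * T * Real.logb 2 q) :=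
  stmt14_general q T M N hq pH hH0
end

section
/- Let C ⊆ F_q^{t×m} be a rank-metric code and 0 < r ≤ m. The minimum rank-distance decoder X̂ = argmin_{X∈C} rank(Y − XH) is guaranteed to return the transmitted codeword X₀ (from Y = X₀H) for every m×n matrix H with rank(H) ≥ r if and only if D(C) ≥ m − r + 1. -/
open Module Matrix

lemma aux_rank_nullity {F : Type*} [Field F] {t m n : ℕ}
    (Z : Matrix (Fin t) (Fin m) F) (H : Matrix (Fin m) (Fin n) F)
    (h : Z * H = 0) : H.rank + Z.rank ≤ m := by
  have hle : LinearMap.range H.mulVecLin ≤ LinearMap.ker Z.mulVecLin := by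
    rintro x ⟨v, rfl⟩
    simp only [LinearMap.mem_ker]
    have := congrArg Matrix.mulVecLin h
    rw [Matrix.mulVecLin_mul] at this
    calc Z.mulVecLin (H.mulVecLin v) = (Z.mulVecLin ∘ₗ H.mulVecLin) v := rfl
    _ = 0 := by rw [this]; simp
  have h1 : H.rank ≤ finrank F (LinearMap.ker Z.mulVecLin) :=
    Submodule.finrank_mono hle
  have h2 := LinearMap.finrank_range_add_finrank_ker Z.mulVecLin
  rw [Module.finrank_fin_fun] at h2
  unfold Matrix.rank at h1 ⊢
  omega

lemma aux_exists_H {F : Type*} [Field F] {t m n r : ℕ} (hrn : r ≤ n)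
    (Z : Matrix (Fin t) (Fin m) F)
    (hk : r ≤ finrank F (LinearMap.ker Z.mulVecLin)) :
    ∃ H : Matrix (Fin m) (Fin n) F, r ≤ H.rank ∧ Z * H = 0 := by
  classical
  set K := LinearMap.ker Z.mulVecLin with hK
  let b := finBasis F K
  have hcast : r ≤ finrank F K := hk
  let v : Fin r → (Fin m → F) := fun j => (b (Fin.castLE hcast j) : Fin m → F)
  have hvmem : ∀ j, v j ∈ K := fun j => (b (Fin.castLE hcast j)).2
  have hli : LinearIndependent F v := by
    have h1 : LinearIndependent F (fun j : Fin r => b (Fin.castLE hcast j)) :=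
      b.linearIndependent.comp _ (Fin.castLE_injective hcast)
    exact h1.map' K.subtype K.ker_subtype
  let H : Matrix (Fin m) (Fin n) F :=
    Matrix.of fun i j => if h : (j : ℕ) < r then v ⟨j, h⟩ i else 0
  refine ⟨H, ?_, ?_⟩
  · have hcol : ∀ j : Fin r, Hᵀ (Fin.castLE hrn j) = v j := by
      intro j
      funext i
      simp [H, Matrix.transpose_apply, j.isLt]
    have hsub : Set.range v ⊆ Set.range Hᵀ := by
      rintro x ⟨j, rfl⟩
      exact ⟨Fin.castLE hrn j, hcol j⟩
    have h1 : Submodule.span F (Set.range v) ≤ Submodule.span F (Set.range Hᵀ) :=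
      Submodule.span_mono hsub
    have h2 : finrank F (Submodule.span F (Set.range v)) = r := by
      rw [finrank_span_eq_card hli, Fintype.card_fin]
    have h3 := Submodule.finrank_mono h1
    rw [h2] at h3
    unfold Matrix.rank
    rwa [Matrix.range_mulVecLin]
  · ext i j
    simp only [Matrix.mul_apply, Matrix.zero_apply]
    by_cases h : (j : ℕ) < r
    · have := hvmem ⟨j, h⟩
      rw [LinearMap.mem_ker] at this
      have h0 : Z.mulVecLin (v ⟨j, h⟩) i = 0 := by rw [this]; rfl
      simp only [Matrix.mulVecLin_apply, Matrix.mulVec, dotProduct] at h0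
      rw [← h0]
      exact Finset.sum_congr rfl fun k _ => by simp [H, h]
    · exact Finset.sum_eq_zero fun k _ => by simp [H, h]

/-- The minimum rank-distance decoder is guaranteed to return the transmitted codeword
`X₀` (from `Y = X₀H`) for every `m × n` matrix `H` with `rank(H) ≥ r` if and only if
the minimum rank distance of the code satisfies `D(C) ≥ m − r + 1`.  (Correct decoding
for all transmitted codewords is equivalent to `X ↦ XH` being injective on `C`.) -/
theorem stmt17 {F : Type*} [Field F] [Fintype F] (t m n r : ℕ)
    (C : Finset (Matrix (Fin t) (Fin m) F)) (hC : 2 ≤ C.card)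
    (hr : 0 < r) (hrm : r ≤ m) (hrn : r ≤ n) :
    (∀ H : Matrix (Fin m) (Fin n) F, r ≤ H.rank →
        ∀ X₀ ∈ C, ∀ X ∈ C, X * H = X₀ * H → X = X₀) ↔
      m - r + 1 ≤ sInf {d : ℕ | ∃ X ∈ C, ∃ X' ∈ C, X ≠ X' ∧ d = (X - X').rank} := by
  have hne : {d : ℕ | ∃ X ∈ C, ∃ X' ∈ C, X ≠ X' ∧ d = (X - X').rank}.Nonempty := by
    obtain ⟨a, ha, b, hb, hab⟩ := Finset.one_lt_card.mp (by omega : 1 < C.card)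
    exact ⟨(a - b).rank, a, ha, b, hb, hab, rfl⟩
  constructor
  · intro hdec
    apply le_csInf hne
    rintro d ⟨X, hX, X', hX', hXX, rfl⟩
    by_contra hlt
    push_neg at hlt
    have hd : (X - X').rank ≤ m - r := by omega
    set Z := X - X' with hZ
    have h2 := LinearMap.finrank_range_add_finrank_ker Z.mulVecLin
    rw [Module.finrank_fin_fun] at h2
    have hkr : r ≤ finrank F (LinearMap.ker Z.mulVecLin) := by
      have : Z.rank = finrank F (LinearMap.range Z.mulVecLin) := rfl
      omega
    obtain ⟨H, hHr, hZH⟩ := aux_exists_H hrn Z hkr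
    have : X * H = X' * H := by
      rw [← sub_eq_zero, ← Matrix.sub_mul, ← hZ, hZH]
    exact hXX (hdec H hHr X' hX' X hX this)
  · intro hinf H hH X₀ hX₀ X hX heq
    by_contra hne'
    have hmem : (X - X₀).rank ∈ {d : ℕ | ∃ X ∈ C, ∃ X' ∈ C, X ≠ X' ∧ d = (X - X').rank} :=
      ⟨X, hX, X₀, hX₀, hne', rfl⟩
    have h1 : m - r + 1 ≤ (X - X₀).rank := le_trans hinf (Nat.sInf_le hmem)
    have h0 : (X - X₀) * H = 0 := by rw [Matrix.sub_mul, heq, sub_self]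
    have h2 := aux_rank_nullity (X - X₀) H h0
    omega
end

section
/- Let τ₁, …, τₙ be i.i.d. random variables taking values in {0, 1, …, m}, with mean E[τ] > α. Then Pr{∑ᵢ τᵢ < nα} ≤ g(α)ⁿ, where g(α) = E[(A/B)^{(τ−α)/m}] < 1, with A = ∑_{r<α} (α − r)·P(τ = r) and B = ∑_{r>α} (r − α)·P(τ = r). -/
lemma exp_interp18 {t c : ℝ} (ht0 : 0 ≤ t) (ht1 : t ≤ 1) :
    Real.exp (t * c) ≤ (1 - t) + t * Real.exp c := by
  have h := convexOn_exp.2 (Set.mem_univ (0:ℝ)) (Set.mem_univ c)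
    (by linarith : (0:ℝ) ≤ 1 - t) ht0 (by ring)
  simpa [smul_eq_mul] using h

lemma exp_interp18_strict {t c : ℝ} (hc : c ≠ 0) (ht0 : 0 < t) (ht1 : t < 1) :
    Real.exp (t * c) < (1 - t) + t * Real.exp c := by
  have h := strictConvexOn_exp.2 (Set.mem_univ (0:ℝ)) (Set.mem_univ c)
    (Ne.symm hc) (by linarith : (0:ℝ) < 1 - t) ht0 (by ring)
  simpa [smul_eq_mul] using h

lemma rpow_upper18 {x t : ℝ} (hx : 0 < x) (ht0 : 0 ≤ t) (ht1 : t ≤ 1) :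
    x ^ t ≤ 1 - t + t * x := by
  rw [Real.rpow_def_of_pos hx, mul_comm]
  calc Real.exp (t * Real.log x) ≤ (1 - t) + t * Real.exp (Real.log x) := exp_interp18 ht0 ht1
  _ = 1 - t + t * x := by rw [Real.exp_log hx]

lemma rpow_upper18_strict {x t : ℝ} (hx : 0 < x) (hx1 : x ≠ 1) (ht0 : 0 < t) (ht1 : t < 1) :
    x ^ t < 1 - t + t * x := by
  rw [Real.rpow_def_of_pos hx, mul_comm]
  have hc : Real.log x ≠ 0 := Real.log_ne_zero_of_pos_of_ne_one hx hx1
  calc Real.exp (t * Real.log x) < (1 - t) + t * Real.exp (Real.log x) :=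
    exp_interp18_strict hc ht0 ht1
  _ = 1 - t + t * x := by rw [Real.exp_log hx]

lemma rpow_lower18 {x t : ℝ} (hx : 0 < x) (ht0 : -1 ≤ t) (ht1 : t ≤ 0) :
    x ^ t ≤ 1 + t - t / x := by
  rw [Real.rpow_def_of_pos hx]
  have h := exp_interp18 (t := -t) (c := -Real.log x) (by linarith) (by linarith)
  have he : Real.exp (-t * -Real.log x) = Real.exp (Real.log x * t) := by ring_nf
  rw [he] at h
  calc Real.exp (Real.log x * t) ≤ (1 - -t) + (-t) * Real.exp (-Real.log x) := h
  _ = 1 + t - t / x := by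
      rw [Real.exp_neg, Real.exp_log hx]
      field_simp
      ring

lemma rpow_finset_sum18 {x : ℝ} (hx : 0 < x) {ι : Type*} (s : Finset ι) (f : ι → ℝ) :
    x ^ (∑ i ∈ s, f i) = ∏ i ∈ s, x ^ f i := by
  induction s using Finset.cons_induction with
  | empty => simp
  | cons a s ha ih => rw [Finset.sum_cons, Finset.prod_cons, Real.rpow_add hx, ih]

open Classical in
theorem stmt18 (m n : ℕ) (hm : 0 < m) (hn : 0 < n) (α : ℝ)
    (p : Fin (m + 1) → ℝ) (hp : ∀ k, 0 ≤ p k) (hsum : ∑ k, p k = 1)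
    (hmean : α < ∑ k, p k * (k : ℝ)) :
    (∑ f ∈ Finset.univ.filter
        (fun f : Fin n → Fin (m + 1) => (∑ i, ((f i : ℕ) : ℝ)) < n * α),
        ∏ i, p (f i)) ≤
      (∑ k : Fin (m + 1), p k *
        ((∑ j : Fin (m + 1), if ((j : ℕ) : ℝ) < α then (α - ((j : ℕ) : ℝ)) * p j else 0) /
          (∑ j : Fin (m + 1), if α < ((j : ℕ) : ℝ) then (((j : ℕ) : ℝ) - α) * p j else 0)) ^
            ((((k : ℕ) : ℝ) - α) / (m : ℝ))) ^ n ∧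
    (∑ k : Fin (m + 1), p k *
        ((∑ j : Fin (m + 1), if ((j : ℕ) : ℝ) < α then (α - ((j : ℕ) : ℝ)) * p j else 0) /
          (∑ j : Fin (m + 1), if α < ((j : ℕ) : ℝ) then (((j : ℕ) : ℝ) - α) * p j else 0)) ^
            ((((k : ℕ) : ℝ) - α) / (m : ℝ))) < 1 := by
  have hm' : (0:ℝ) < m := by exact_mod_cast hm
  set A := (∑ j : Fin (m + 1), if ((j : ℕ) : ℝ) < α then (α - ((j : ℕ) : ℝ)) * p j else 0)
    with hAdef
  set B := (∑ j : Fin (m + 1), if α < ((j : ℕ) : ℝ) then (((j : ℕ) : ℝ) - α) * p j else 0)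
    with hBdef
  set x := A / B with hxdef
  set g := (∑ k : Fin (m + 1), p k * x ^ ((((k : ℕ) : ℝ) - α) / (m : ℝ))) with hgdef
  have hA0 : 0 ≤ A := by
    rw [hAdef]
    apply Finset.sum_nonneg
    intro j _
    by_cases h : ((j : ℕ) : ℝ) < α
    · rw [if_pos h]; exact mul_nonneg (by linarith) (hp j)
    · rw [if_neg h]
  have hBA : B - A = (∑ k, p k * (k : ℝ)) - α := by
    rw [hAdef, hBdef, ← Finset.sum_sub_distrib]
    have key : ∀ j : Fin (m+1),
        ((if α < ((j : ℕ) : ℝ) then (((j : ℕ) : ℝ) - α) * p j else 0) -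
          (if ((j : ℕ) : ℝ) < α then (α - ((j : ℕ) : ℝ)) * p j else 0))
          = p j * ((j : ℕ) : ℝ) - α * p j := by
      intro j
      rcases lt_trichotomy (((j : ℕ) : ℝ)) α with h | h | h
      · rw [if_neg (not_lt.2 h.le), if_pos h]; ring
      · rw [if_neg (not_lt.2 h.le), if_neg (not_lt.2 h.ge), h]; ring
      · rw [if_pos h, if_neg (not_lt.2 h.le)]; ring
    rw [Finset.sum_congr rfl fun j _ => key j, Finset.sum_sub_distrib, ← Finset.mul_sum, hsum,
      mul_one]
  have hBpos : 0 < B := by linarith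
  have hBne : B ≠ 0 := ne_of_gt hBpos
  have hALB : A < B := by linarith
  have hxlt1 : x < 1 := (div_lt_one hBpos).2 hALB
  have hx0 : 0 ≤ x := div_nonneg hA0 hBpos.le
  -- a point above α with positive mass
  have hex : ∃ j : Fin (m+1), α < ((j : ℕ) : ℝ) ∧ 0 < p j := by
    by_contra hcon
    push_neg at hcon
    have hBle : B ≤ 0 := by
      rw [hBdef]
      apply Finset.sum_nonpos
      intro j _
      by_cases h : α < ((j : ℕ) : ℝ)
      · have hpj : p j = 0 := le_antisymm (hcon j h) (hp j)
        rw [if_pos h, hpj, mul_zero]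
      · rw [if_neg h]
    linarith
  obtain ⟨k₀, hk₀α, hk₀p⟩ := hex
  have hk₀m : ((k₀ : ℕ) : ℝ) ≤ m := by exact_mod_cast Fin.is_le k₀
  have hαm : α < (m : ℝ) := lt_of_lt_of_le hk₀α hk₀m
  rcases eq_or_lt_of_le hA0 with hA | hA
  · -- A = 0
    have hx : x = 0 := by rw [hxdef, ← hA, zero_div]
    have hpzero : ∀ j : Fin (m+1), ((j : ℕ) : ℝ) < α → p j = 0 := by
      intro j hj
      have hterm := (Finset.sum_eq_zero_iff_of_nonneg (fun j _ => by
        by_cases h : ((j : ℕ) : ℝ) < α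
        · rw [if_pos h]; exact mul_nonneg (by linarith) (hp j)
        · rw [if_neg h])).1 hA.symm j (Finset.mem_univ j)
      rw [if_pos hj] at hterm
      rcases mul_eq_zero.1 hterm with h | h
      · linarith
      · exact h
    constructor
    · have hL : (∑ f ∈ Finset.univ.filter
          (fun f : Fin n → Fin (m + 1) => (∑ i, ((f i : ℕ) : ℝ)) < n * α),
          ∏ i, p (f i)) = 0 := by
        apply Finset.sum_eq_zero
        intro f hf
        rw [Finset.mem_filter] at hf
        have hex2 : ∃ i, ((f i : ℕ) : ℝ) < α := by
          by_contra hcon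
          push_neg at hcon
          have : (n : ℝ) * α ≤ ∑ i, ((f i : ℕ) : ℝ) := by
            calc (n : ℝ) * α = ∑ _i : Fin n, α := by
                  rw [Finset.sum_const, Finset.card_univ, Fintype.card_fin, nsmul_eq_mul]
            _ ≤ _ := Finset.sum_le_sum fun i _ => hcon i
          linarith [hf.2]
        obtain ⟨i, hi⟩ := hex2
        exact Finset.prod_eq_zero (Finset.mem_univ i) (hpzero _ hi)
      rw [hL]
      apply pow_nonneg
      rw [hgdef]
      exact Finset.sum_nonneg fun k _ => mul_nonneg (hp k) (Real.rpow_nonneg hx0 _)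
    · rw [hgdef, ← hsum]
      apply Finset.sum_lt_sum
      · intro k _
        rw [hx]
        by_cases h : ((((k : ℕ) : ℝ) - α) / m) = 0
        · rw [h, Real.rpow_zero, mul_one]
        · rw [Real.zero_rpow h, mul_zero]; exact hp k
      · refine ⟨k₀, Finset.mem_univ k₀, ?_⟩
        rw [hx, Real.zero_rpow (ne_of_gt (div_pos (by linarith) hm')), mul_zero]
        exact hk₀p
  · -- A > 0
    have hxpos : 0 < x := div_pos hA hBpos
    have hxne1 : x ≠ 1 := ne_of_lt hxlt1
    -- a point below α with positive mass, hence α > 0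
    have hex1 : ∃ j : Fin (m+1), ((j : ℕ) : ℝ) < α ∧ 0 < p j := by
      by_contra hcon
      push_neg at hcon
      have hAle : A ≤ 0 := by
        rw [hAdef]
        apply Finset.sum_nonpos
        intro j _
        by_cases h : ((j : ℕ) : ℝ) < α
        · have hpj : p j = 0 := le_antisymm (hcon j h) (hp j)
          rw [if_pos h, hpj, mul_zero]
        · rw [if_neg h]
      linarith
    obtain ⟨j₁, hj₁α, _⟩ := hex1
    have hα0 : 0 < α := lt_of_le_of_lt (Nat.cast_nonneg _) hj₁α
    -- the interpolation weights
    set w : Fin (m+1) → ℝ := fun k =>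
      if ((k : ℕ) : ℝ) < α then
        1 + ((((k : ℕ) : ℝ) - α) / m) - ((((k : ℕ) : ℝ) - α) / m) / x
      else
        1 - ((((k : ℕ) : ℝ) - α) / m) + ((((k : ℕ) : ℝ) - α) / m) * x with hwdef
    have hbound : ∀ k : Fin (m+1), p k * x ^ ((((k : ℕ) : ℝ) - α) / m) ≤ p k * w k := by
      intro k
      apply mul_le_mul_of_nonneg_left _ (hp k)
      have hkm : ((k : ℕ) : ℝ) ≤ m := by exact_mod_cast Fin.is_le k
      have hk0 : (0:ℝ) ≤ ((k : ℕ) : ℝ) := Nat.cast_nonneg _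
      rw [hwdef]
      simp only []
      by_cases h : ((k : ℕ) : ℝ) < α
      · rw [if_pos h]
        apply rpow_lower18 hxpos
        · rw [le_div_iff₀ hm']; linarith
        · apply div_nonpos_of_nonpos_of_nonneg (by linarith) hm'.le
      · rw [if_neg h]
        push_neg at h
        apply rpow_upper18 hxpos
        · exact div_nonneg (by linarith) hm'.le
        · rw [div_le_one hm']; linarith
    have hstrict : p k₀ * x ^ ((((k₀ : ℕ) : ℝ) - α) / m) < p k₀ * w k₀ := by
      apply mul_lt_mul_of_pos_left _ hk₀p
      rw [hwdef]
      simp only []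
      rw [if_neg (not_lt.2 hk₀α.le)]
      apply rpow_upper18_strict hxpos hxne1
      · exact div_pos (by linarith) hm'
      · rw [div_lt_one hm']; linarith
    have hwsum : ∑ k, p k * w k = 1 := by
      have key : ∀ k : Fin (m+1), p k * w k = p k
          + (-(1 - 1/x)/m) * (if ((k : ℕ) : ℝ) < α then (α - ((k : ℕ) : ℝ)) * p k else 0)
          + ((x - 1)/m) * (if α < ((k : ℕ) : ℝ) then (((k : ℕ) : ℝ) - α) * p k else 0) := by
        intro k
        rw [hwdef]
        simp only []
        rcases lt_trichotomy (((k : ℕ) : ℝ)) α with h | h | h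
        · rw [if_pos h, if_pos h, if_neg (not_lt.2 h.le)]
          field_simp
          ring
        · rw [if_neg (not_lt.2 h.ge), if_neg (not_lt.2 h.ge), if_neg (not_lt.2 h.le), h]
          ring
        · rw [if_neg (not_lt.2 h.le), if_neg (not_lt.2 h.le), if_pos h]
          field_simp
          ring
      rw [Finset.sum_congr rfl fun k _ => key k, Finset.sum_add_distrib,
        Finset.sum_add_distrib, ← Finset.mul_sum, ← Finset.mul_sum, ← hAdef, ← hBdef, hsum,
        hxdef]
      have hAne : A ≠ 0 := ne_of_gt hA
      field_simp
      ring
    have hg1 : g < 1 := by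
      rw [hgdef, ← hwsum]
      exact Finset.sum_lt_sum (fun k _ => hbound k) ⟨k₀, Finset.mem_univ k₀, hstrict⟩
    refine ⟨?_, hg1⟩
    set q : Fin (m+1) → ℝ := fun k => p k * x ^ ((((k : ℕ) : ℝ) - α) / m) with hqdef
    have hfact : g ^ n = ∑ f : Fin n → Fin (m+1), ∏ i, q (f i) := by
      have h1 : g ^ n = ∏ _i : Fin n, g := by
        rw [Finset.prod_const, Finset.card_univ, Fintype.card_fin]
      rw [h1, hgdef]
      rw [Finset.prod_univ_sum (fun _ => Finset.univ) (fun _ k => q k), Fintype.piFinset_univ]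
    calc (∑ f ∈ Finset.univ.filter
          (fun f : Fin n → Fin (m + 1) => (∑ i, ((f i : ℕ) : ℝ)) < n * α),
          ∏ i, p (f i))
        ≤ ∑ f ∈ Finset.univ.filter
          (fun f : Fin n → Fin (m + 1) => (∑ i, ((f i : ℕ) : ℝ)) < n * α),
          ∏ i, q (f i) := by
          apply Finset.sum_le_sum
          intro f hf
          rw [Finset.mem_filter] at hf
          have hprod : ∏ i, q (f i)
              = (∏ i, p (f i)) * x ^ (((∑ i, ((f i : ℕ) : ℝ)) - n * α) / m) := by
            rw [hqdef]
            simp only []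
            rw [Finset.prod_mul_distrib, ← rpow_finset_sum18 hxpos]
            congr 2
            rw [← Finset.sum_div, Finset.sum_sub_distrib, Finset.sum_const,
              Finset.card_univ, Fintype.card_fin, nsmul_eq_mul]
          rw [hprod]
          apply le_mul_of_one_le_right (Finset.prod_nonneg fun i _ => hp _)
          apply le_of_lt
          apply Real.one_lt_rpow_of_pos_of_lt_one_of_neg hxpos hxlt1
          exact div_neg_of_neg_of_pos (by linarith [hf.2]) hm'
      _ ≤ ∑ f : Fin n → Fin (m+1), ∏ i, q (f i) := by
          apply Finset.sum_le_sum_of_subset_of_nonneg (Finset.filter_subset _ _)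
          intro f _ _
          exact Finset.prod_nonneg fun i _ => mul_nonneg (hp _) (Real.rpow_nonneg hx0 _)
      _ = g ^ n := hfact.symm
end
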